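/- Let G be a simple undirected graph whose vertex set is partitioned into (V1, V2) such that both induced subgraphs G[V1] and G[V2] are forests, every vertex of V1 has degree at least 3 in G, V1 is nonempty, and the number of connected components of G[V2] is at most k + 1. If |V1| > 3k, then G has no V1-FVS of size at most k. -/

import Mathlib

/-!
Let `S = V1 \ F`. Both `G[V1] = G[S ∪ F]` and `G - F = G[S ∪ V2]` are forests, so each has fewer
edges than vertices, while `G[V2]` has at least `|V2| - c(G[V2])` edges. Every edge at a vertex
of `S` lies in one of the two forests, and the edges inside `S` lie in both, so
`3|S| ≤ ∑_{v ∈ S} deg v ≤ e(S ∪ F) + e(S ∪ V2) - e(V2) ≤ 2|S| + |F| + c(G[V2]) - 2`.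
Hence `|V1| = |S| + |F| ≤ 2|F| + c(G[V2]) - 2 ≤ 3k - 1`.
-/

open Finset

/-- A feedback vertex set of `G` is a set `F` of vertices whose deletion leaves
an acyclic graph. -/
def IsFVS {V : Type*} (G : SimpleGraph V) (F : Set V) : Prop :=
  (G.induce (Fᶜ : Set V)).IsAcyclic

namespace SimpleGraph

variable {V : Type*} {G : SimpleGraph V}

lemma Reachable.deleteEdges_singleton_or {a b v w : V} (h : G.Reachable v w) :
    (G.deleteEdges {s(a, b)}).Reachable v w ∨ (G.deleteEdges {s(a, b)}).Reachable v a ∨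
      (G.deleteEdges {s(a, b)}).Reachable v b := by
  obtain ⟨p⟩ := h
  induction p with
  | nil => exact .inl .rfl
  | @cons u x w hadj p ih =>
    by_cases he : s(u, x) = s(a, b)
    · rcases Sym2.eq_iff.mp he with ⟨rfl, -⟩ | ⟨rfl, -⟩
      · exact .inr (.inl .rfl)
      · exact .inr (.inr .rfl)
    · have hadj' : (G.deleteEdges {s(a, b)}).Adj u x := by simp [hadj, he]
      exact ih.imp hadj'.reachable.trans (Or.imp hadj'.reachable.trans hadj'.reachable.trans)

lemma card_connectedComponent_deleteEdges_le [Finite V] (a b : V) :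
    Nat.card (G.deleteEdges {s(a, b)}).ConnectedComponent ≤
      Nat.card G.ConnectedComponent + 1 := by
  classical
  have := Fintype.ofFinite G.ConnectedComponent
  have := Fintype.ofFinite (G.deleteEdges {s(a, b)}).ConnectedComponent
  let φ := ConnectedComponent.map (Hom.ofLE (G.deleteEdges_le {s(a, b)}))
  -- only the components of `a` and `b` can merge when the edge is put back
  have hinj : Set.InjOn φ ↑(univ.erase ((G.deleteEdges {s(a, b)}).connectedComponentMk a)) := by
    intro C hC D hD hCD
    induction C using ConnectedComponent.ind with | h v => ?_
    induction D using ConnectedComponent.ind with | h w => ?_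
    simp only [coe_erase, coe_univ, Set.mem_sdiff, Set.mem_univ, Set.mem_singleton_iff,
      true_and, ConnectedComponent.eq] at hC hD
    simp only [φ, ConnectedComponent.map_mk, ConnectedComponent.eq, Hom.coe_ofLE, id] at hCD ⊢
    rcases hCD.deleteEdges_singleton_or (a := a) (b := b) with h | h | hvb
    · exact h
    · exact absurd h hC
    rcases hCD.symm.deleteEdges_singleton_or (a := a) (b := b) with h | h | hwb
    · exact h.symm
    · exact absurd h hD
    · exact hvb.trans hwb.symm
  have := card_le_card_of_injOn φ (fun _ _ ↦ mem_univ _) hinj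
  rw [card_erase_of_mem (mem_univ _), card_univ, card_univ] at this
  rw [Nat.card_eq_fintype_card, Nat.card_eq_fintype_card]
  omega

lemma card_le_card_edgeSet_add_card_connectedComponent [Finite V] (G : SimpleGraph V) :
    Nat.card V ≤ Nat.card G.edgeSet + Nat.card G.ConnectedComponent := by
  obtain ⟨n, hn⟩ : ∃ n, Nat.card G.edgeSet = n := ⟨_, rfl⟩
  induction n generalizing G with
  | zero =>
    obtain rfl : G = ⊥ :=
      edgeSet_eq_empty.mp (Set.isEmpty_coe_sort.mp (Finite.card_eq_zero_iff.mp hn))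
    refine le_add_left (Nat.card_le_card_of_injective (⊥ : SimpleGraph V).connectedComponentMk
      fun v w h ↦ ?_)
    simpa using ConnectedComponent.exact h
  | succ n ih =>
    obtain ⟨e, he⟩ : G.edgeSet.Nonempty :=
      Set.nonempty_of_ncard_ne_zero (by rw [← Nat.card_coe_set_eq, hn]; omega)
    induction e using Sym2.ind with | h a b => ?_
    have hcard : Nat.card (G.deleteEdges {s(a, b)}).edgeSet = n := by
      rw [edgeSet_deleteEdges, Nat.card_coe_set_eq, Set.ncard_sdiff_singleton_of_mem he,
        ← Nat.card_coe_set_eq, hn, Nat.add_sub_cancel]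
    have := ih _ hcard
    have := G.card_connectedComponent_deleteEdges_le a b
    omega

lemma IsAcyclic.card_edgeSet_lt [Finite V] [Nonempty V] (hG : G.IsAcyclic) :
    Nat.card G.edgeSet < Nat.card V := by
  have := Fintype.ofFinite V
  obtain ⟨T, hGT, -, hT⟩ := connected_top.exists_isTree_le_of_le_of_isAcyclic le_top hG
  have := Fintype.ofFinite T.edgeSet
  calc Nat.card G.edgeSet ≤ Nat.card T.edgeSet :=
        Nat.card_mono (Set.toFinite _) (edgeSet_mono hGT)
    _ < Nat.card V := by
        rw [Nat.card_eq_fintype_card, Nat.card_eq_fintype_card, ← hT.card_edgeFinset,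
          ← edgeFinset_card]
        omega

section Interedges

variable [DecidableRel G.Adj]

lemma sum_degree_eq_card_interedges_univ [Fintype V] (s : Finset V) :
    ∑ v ∈ s, G.degree v = #(G.interedges s univ) := by
  simp_rw [interedges_def, card_filter, sum_product, ← card_filter, ← neighborFinset_eq_filter,
    card_neighborFinset_eq_degree]

lemma two_mul_card_edgeSet_induce (s : Finset V) :
    2 * Nat.card (G.induce (s : Set V)).edgeSet = #(G.interedges s s) := by
  rw [Nat.card_eq_fintype_card, ← edgeFinset_card, two_mul_card_edgeFinset]
  refine card_bij (fun p _ ↦ (p.1.1, p.2.1)) ?_ ?_ ?_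
  · simp [mem_interedges_iff]
  · intro p _ q _ h
    obtain ⟨h₁, h₂⟩ := Prod.mk.inj h
    exact Prod.ext (Subtype.ext h₁) (Subtype.ext h₂)
  · intro p hp
    simp only [mem_interedges_iff] at hp
    exact ⟨(⟨p.1, hp.1⟩, ⟨p.2, hp.2.1⟩), by simpa using hp.2.2, rfl⟩

lemma two_mul_card_le_card_interedges_add (s : Finset V) :
    2 * #s ≤ #(G.interedges s s) + 2 * Nat.card (G.induce (s : Set V)).ConnectedComponent := by
  have := (G.induce (s : Set V)).card_le_card_edgeSet_add_card_connectedComponent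
  rw [Nat.card_coe_set_eq (s : Set V), Set.ncard_coe_finset] at this
  rw [← two_mul_card_edgeSet_induce]
  omega

lemma IsAcyclic.card_interedges_add_two_le {s : Finset V} (hs : s.Nonempty)
    (h : (G.induce (s : Set V)).IsAcyclic) : #(G.interedges s s) + 2 ≤ 2 * #s := by
  have := hs.coe_sort
  have := h.card_edgeSet_lt
  rw [Nat.card_coe_set_eq (s : Set V), Set.ncard_coe_finset] at this
  rw [← two_mul_card_edgeSet_induce]
  omega

variable [DecidableEq V]

lemma card_interedges_union_left {s₁ s₂ : Finset V} (h : Disjoint s₁ s₂) (t : Finset V) :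
    #(G.interedges (s₁ ∪ s₂) t) = #(G.interedges s₁ t) + #(G.interedges s₂ t) := by
  rw [← card_union_of_disjoint (G.interedges_disjoint_left h t), interedges_def, interedges_def,
    interedges_def, union_product, filter_union]

lemma card_interedges_union_right (s : Finset V) {t₁ t₂ : Finset V} (h : Disjoint t₁ t₂) :
    #(G.interedges s (t₁ ∪ t₂)) = #(G.interedges s t₁) + #(G.interedges s t₂) := by
  rw [← card_union_of_disjoint (G.interedges_disjoint_right s h), interedges_def, interedges_def,
    interedges_def, product_union, filter_union]

lemma card_interedges_union_self {s t : Finset V} (h : Disjoint s t) :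
    #(G.interedges (s ∪ t) (s ∪ t)) =
      #(G.interedges s s) + 2 * #(G.interedges s t) + #(G.interedges t t) := by
  have hcomm : #(G.interedges t s) = #(G.interedges s t) :=
    @Rel.card_interedges_comm _ G.Adj _ G.symm t s
  rw [card_interedges_union_left h, card_interedges_union_right _ h,
    card_interedges_union_right _ h, hcomm]
  ring

end Interedges

theorem card_add_two_le_of_isAcyclic_induce [Fintype V] [DecidableEq V] [DecidableRel G.Adj]
    {S F B : Finset V} (hSF : Disjoint S F) (hSB : Disjoint S B) (hFB : Disjoint F B)
    (hcover : S ∪ F ∪ B = univ) (hS : S.Nonempty) (hdeg : ∀ v ∈ S, 3 ≤ G.degree v)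
    (hSF_acyclic : (G.induce (S ∪ F : Finset V)).IsAcyclic)
    (hSB_acyclic : (G.induce (S ∪ B : Finset V)).IsAcyclic) :
    #S + 2 ≤ #F + Nat.card (G.induce (B : Set V)).ConnectedComponent := by
  have hdeg_sum : 3 * #S ≤
      #(G.interedges S S) + #(G.interedges S F) + #(G.interedges S B) := calc
    3 * #S = ∑ _v ∈ S, 3 := by rw [sum_const, smul_eq_mul, mul_comm]
    _ ≤ ∑ v ∈ S, G.degree v := sum_le_sum hdeg
    _ = _ := by
      rw [sum_degree_eq_card_interedges_univ, ← hcover,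
        card_interedges_union_right _ (disjoint_union_left.mpr ⟨hSB, hFB⟩),
        card_interedges_union_right _ hSF]
  have hSF_edges := hSF_acyclic.card_interedges_add_two_le (hS.mono subset_union_left)
  have hSB_edges := hSB_acyclic.card_interedges_add_two_le (hS.mono subset_union_left)
  have hB_edges := G.two_mul_card_le_card_interedges_add B
  rw [card_interedges_union_self hSF, card_union_of_disjoint hSF] at hSF_edges
  rw [card_interedges_union_self hSB, card_union_of_disjoint hSB] at hSB_edges
  omega

end SimpleGraph

theorem stmt_4_general {V : Type*} [Fintype V]
    (G : SimpleGraph V) [DecidableRel G.Adj] (V1 V2 : Set V)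
    (hpart : V1 ∪ V2 = Set.univ) (hdisj : Disjoint V1 V2)
    (hforest1 : (G.induce V1).IsAcyclic)
    (hdeg : ∀ v ∈ V1, 3 ≤ G.degree v)
    (k : ℕ)
    (hl : Nat.card (G.induce V2).ConnectedComponent ≤ k + 1)
    (hbig : V1.ncard > 3 * k) :
    ¬ ∃ F : Set V, F ⊆ V1 ∧ IsFVS G F ∧ F.ncard ≤ k := by
  classical
  rintro ⟨F, hFV1, hF, hFk⟩
  have hV1 : (((V1 \ F).toFinset ∪ F.toFinset : Finset V) : Set V) = V1 := by
    simp [hFV1]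
  have hFc : (((V1 \ F).toFinset ∪ V2.toFinset : Finset V) : Set V) = Fᶜ := by
    rw [coe_union, Set.coe_toFinset, Set.coe_toFinset,
      ← (hdisj.mono_left hFV1).symm.sdiff_eq_left, ← Set.union_sdiff_distrib, hpart,
      Set.compl_eq_univ_sdiff]
  have hcard : V1.ncard = #(V1 \ F).toFinset + #F.toFinset := by
    rw [← Set.ncard_sdiff_add_ncard_of_subset hFV1, Set.ncard_eq_toFinset_card',
      Set.ncard_eq_toFinset_card']
  rw [Set.ncard_eq_toFinset_card'] at hFk
  have key := G.card_add_two_le_of_isAcyclic_induce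
    (Set.disjoint_toFinset.mpr Set.disjoint_sdiff_left)
    (Set.disjoint_toFinset.mpr (hdisj.mono_left Set.sdiff_subset))
    (Set.disjoint_toFinset.mpr (hdisj.mono_left hFV1))
    (by rw [← coe_inj, coe_union, hV1, Set.coe_toFinset, hpart, coe_univ])
    (card_pos.mp (by omega))
    (fun v hv ↦ hdeg v (Set.mem_toFinset.mp hv).1)
    (by rwa [hV1]) (by rw [hFc]; exact hF)
  rw [Set.coe_toFinset] at key
  omega

/-- If every vertex of `V1` has degree at least 3 in `G`, `V1` is nonempty, the
number of connected components of `G[V2]` is at most `k + 1`, and `|V1| > 3k`,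
then `G` has no `V1`-FVS of size at most `k`. -/
theorem stmt_4 {V : Type*} [Fintype V] [DecidableEq V]
    (G : SimpleGraph V) [DecidableRel G.Adj] (V1 V2 : Set V)
    (hpart : V1 ∪ V2 = Set.univ) (hdisj : Disjoint V1 V2)
    (hforest1 : (G.induce V1).IsAcyclic) (hforest2 : (G.induce V2).IsAcyclic)
    (hdeg : ∀ v ∈ V1, 3 ≤ G.degree v)
    (hne : V1.Nonempty)
    (k : ℕ)
    (hl : Nat.card (G.induce V2).ConnectedComponent ≤ k + 1)
    (hbig : V1.ncard > 3 * k) :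
    ¬ ∃ F : Set V, F ⊆ V1 ∧ IsFVS G F ∧ F.ncard ≤ k :=
  stmt_4_general G V1 V2 hpart hdisj hforest1 hdeg k hl hbig
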